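/- arXiv:2209.13719 — 2 statements merged into one kernel-verified Lean document; each statement's English description precedes it below -/
import Mathlib

section
/- Let K ⊂ ℝ^n_+ be compact and let F ∈ T^{p,q} with 1 ≤ q < p < ∞. Then ‖F‖_{L^q(K)} ≤ C |E(K)|^{1/q - 1/p} ‖F‖_{T^{p,q}}, where E(K) = {x' ∈ ℝ^{n-1} : K ∩ Γ(x') ≠ ∅} and C depends only on n. -/
open MeasureTheory Set ENNReal

/-- The cone (nontangential region) of aperture 1 with vertex `x' ∈ ℝ^{n-1}`. -/
def cone (n : ℕ) (x' : EuclideanSpace ℝ (Fin (n - 1))) :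
    Set (EuclideanSpace ℝ (Fin (n - 1)) × ℝ) :=
  {p | 0 < p.2 ∧ dist x' p.1 < p.2}

/-- The conical functional `A_q F(x') = (∫∫_{Γ(x')} |F|^q y_n^{-(n-1)})^{1/q}`. -/
noncomputable def conicalFun (n : ℕ) (q : ℝ)
    (F : EuclideanSpace ℝ (Fin (n - 1)) × ℝ → ℝ)
    (x' : EuclideanSpace ℝ (Fin (n - 1))) : ℝ≥0∞ :=
  (∫⁻ p in cone n x', ENNReal.ofReal |F p| ^ q * ENNReal.ofReal (p.2 ^ (-((n : ℝ) - 1)))) ^ (1 / q)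

/-- The tent space norm `‖F‖_{T^{p,q}} = ‖A_q F‖_{L^p(ℝ^{n-1})}`. -/
noncomputable def tentNorm (n : ℕ) (p q : ℝ)
    (F : EuclideanSpace ℝ (Fin (n - 1)) × ℝ → ℝ) : ℝ≥0∞ :=
  (∫⁻ x' : EuclideanSpace ℝ (Fin (n - 1)), conicalFun n q F x' ^ p) ^ (1 / p)

/-- For `K ⊂ ℝ^n_+` compact and `F ∈ T^{p,q}` with `1 ≤ q < p < ∞`:
`‖F‖_{L^q(K)} ≤ C |E(K)|^{1/q-1/p} ‖F‖_{T^{p,q}}` with `C` depending only on `n`. -/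
theorem Lq_on_compact_le_tentNorm (n : ℕ) (hn : 2 ≤ n) :
    ∃ C : ℝ, 0 < C ∧
      ∀ (p q : ℝ), 1 ≤ q → q < p →
        ∀ (K : Set (EuclideanSpace ℝ (Fin (n - 1)) × ℝ)), IsCompact K →
          K ⊆ {pt : EuclideanSpace ℝ (Fin (n - 1)) × ℝ | 0 < pt.2} →
          ∀ (F : EuclideanSpace ℝ (Fin (n - 1)) × ℝ → ℝ), Measurable F →
            tentNorm n p q F < ⊤ →
            (∫⁻ pt in K, ENNReal.ofReal |F pt| ^ q) ^ (1 / q) ≤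
              ENNReal.ofReal C *
                (volume {x' : EuclideanSpace ℝ (Fin (n - 1)) | (K ∩ cone n x').Nonempty})
                    ^ (1 / q - 1 / p) *
                  tentNorm n p q F := by
  classical
  set c : ℝ≥0∞ := volume (Metric.ball (0 : EuclideanSpace ℝ (Fin (n - 1))) 1) with hc_def
  have hc0 : 0 < c := Metric.measure_ball_pos _ _ one_pos
  have hctop : c ≠ ⊤ := measure_ball_lt_top.ne
  have hcitop : c⁻¹ ≠ ⊤ := ENNReal.inv_ne_top.mpr hc0.ne'
  refine ⟨max 1 c⁻¹.toReal, lt_of_lt_of_le one_pos (le_max_left _ _), ?_⟩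
  intro p q hq hqp K hKcomp hKpos F hF htent
  have hq0 : (0:ℝ) < q := lt_of_lt_of_le one_pos hq
  have hp0 : (0:ℝ) < p := hq0.trans hqp
  have hq' : (0:ℝ) ≤ 1 / q := by positivity
  have hKmeas : MeasurableSet K := hKcomp.isClosed.measurableSet
  -- the integrand on the upper half-space side
  set g : EuclideanSpace ℝ (Fin (n - 1)) × ℝ → ℝ≥0∞ :=
    fun pt => ENNReal.ofReal |F pt| ^ q * ENNReal.ofReal (pt.2 ^ (-((n : ℝ) - 1))) with hg_def
  have hnfmeas : Measurable fun pt : EuclideanSpace ℝ (Fin (n - 1)) × ℝ =>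
      ENNReal.ofReal |F pt| ^ q :=
    (ENNReal.measurable_ofReal.comp hF.abs).pow measurable_const
  have hgmeas : Measurable g :=
    hnfmeas.mul (ENNReal.measurable_ofReal.comp (measurable_snd.pow measurable_const))
  -- cones are open
  have hconeOpen : ∀ x' : EuclideanSpace ℝ (Fin (n - 1)), IsOpen (cone n x') := by
    intro x'
    have h : cone n x' = {pt : EuclideanSpace ℝ (Fin (n - 1)) × ℝ | 0 < pt.2} ∩
        {pt | dist x' pt.1 < pt.2} := rfl
    rw [h]
    exact (isOpen_lt continuous_const continuous_snd).inter
      (isOpen_lt (continuous_const.dist continuous_fst) continuous_snd)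
  -- the "incidence" set in the product space
  set T : Set (EuclideanSpace ℝ (Fin (n - 1)) × (EuclideanSpace ℝ (Fin (n - 1)) × ℝ)) :=
    {z | z.2 ∈ cone n z.1} with hT_def
  have hTopen : IsOpen T := by
    have h : T = {z : EuclideanSpace ℝ (Fin (n - 1)) ×
          (EuclideanSpace ℝ (Fin (n - 1)) × ℝ) | 0 < z.2.2} ∩
        {z | dist z.1 z.2.1 < z.2.2} := rfl
    rw [h]
    exact (isOpen_lt continuous_const (continuous_snd.comp continuous_snd)).inter
      (isOpen_lt (continuous_fst.dist (continuous_fst.comp continuous_snd))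
        (continuous_snd.comp continuous_snd))
  -- the shadow set E
  set E := {x' : EuclideanSpace ℝ (Fin (n - 1)) | (K ∩ cone n x').Nonempty} with hE_def
  have hEmeas : MeasurableSet E := by
    have h : E = ⋃ pt ∈ K, Metric.ball pt.1 pt.2 := by
      ext x'
      constructor
      · rintro ⟨pt, hptK, hpt2, hdist⟩
        exact Set.mem_biUnion hptK (Metric.mem_ball.mpr hdist)
      · intro hx'
        rcases Set.mem_iUnion₂.mp hx' with ⟨pt, hptK, hball⟩
        exact ⟨pt, hptK, hKpos hptK, Metric.mem_ball.mp hball⟩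
    rw [h]
    exact (isOpen_biUnion fun pt _ => Metric.isOpen_ball).measurableSet
  -- the kernel
  set φ : EuclideanSpace ℝ (Fin (n - 1)) → EuclideanSpace ℝ (Fin (n - 1)) × ℝ → ℝ≥0∞ :=
    fun x' pt => K.indicator g pt * T.indicator (fun _ => 1) (x', pt) with hφ_def
  have hφmeas : Measurable (Function.uncurry φ) :=
    ((hgmeas.indicator hKmeas).comp measurable_snd).mul
      (measurable_const.indicator hTopen.measurableSet)
  have hswap : (∫⁻ x', ∫⁻ pt, φ x' pt) = ∫⁻ pt, ∫⁻ x', φ x' pt :=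
    lintegral_lintegral_swap hφmeas.aemeasurable
  -- volume of the slice
  have hvol : ∀ pt ∈ K, volume {x' : EuclideanSpace ℝ (Fin (n - 1)) | (x', pt) ∈ T}
      = ENNReal.ofReal (pt.2 ^ (n - 1)) * c := by
    intro pt hpt
    have h2 : 0 < pt.2 := hKpos hpt
    have hset : {x' : EuclideanSpace ℝ (Fin (n - 1)) | (x', pt) ∈ T}
        = Metric.ball pt.1 pt.2 := by
      ext x'
      simp [hT_def, cone, Metric.mem_ball, h2]
    rw [hset, Measure.addHaar_ball_of_pos volume pt.1 h2, finrank_euclideanSpace_fin]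
  -- inner integral computation
  have hinner : ∀ pt, (∫⁻ x', φ x' pt)
      = K.indicator (fun pt => g pt * (ENNReal.ofReal (pt.2 ^ (n - 1)) * c)) pt := by
    intro pt
    by_cases hpt : pt ∈ K
    · rw [Set.indicator_of_mem hpt]
      have hsec : MeasurableSet {x' : EuclideanSpace ℝ (Fin (n - 1)) | (x', pt) ∈ T} :=
        measurable_prodMk_right hTopen.measurableSet
      have heq : ∀ x', φ x' pt
          = g pt * ({x' : EuclideanSpace ℝ (Fin (n - 1)) | (x', pt) ∈ T}).indicator
              (fun _ => 1) x' := by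
        intro x'
        simp only [hφ_def, Set.indicator_of_mem hpt]
        by_cases hx : (x', pt) ∈ T
        · rw [Set.indicator_of_mem hx,
            Set.indicator_of_mem (show x' ∈ {x' | (x', pt) ∈ T} from hx)]
        · rw [Set.indicator_of_notMem hx,
            Set.indicator_of_notMem (show x' ∉ {x' | (x', pt) ∈ T} from hx)]
      simp_rw [heq]
      rw [lintegral_const_mul _ (measurable_const.indicator hsec),
        lintegral_indicator_const hsec, hvol pt hpt, one_mul]
    · rw [Set.indicator_of_notMem hpt]
      have h0 : ∀ x', φ x' pt = 0 := by
        intro x'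
        simp only [hφ_def, Set.indicator_of_notMem hpt, zero_mul]
      simp [h0]
  -- lower bound: c times the L^q integral over K
  have hleft : (∫⁻ pt, ∫⁻ x', φ x' pt)
      = c * ∫⁻ pt in K, ENNReal.ofReal |F pt| ^ q := by
    simp_rw [hinner]
    rw [lintegral_indicator hKmeas]
    rw [setLIntegral_congr_fun hKmeas (fun pt hpt => ?_),
      lintegral_const_mul c hnfmeas]
    have h2 : 0 < pt.2 := hKpos hpt
    have hw : ENNReal.ofReal (pt.2 ^ (-((n : ℝ) - 1))) * ENNReal.ofReal (pt.2 ^ (n - 1))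
        = 1 := by
      rw [← ENNReal.ofReal_mul (Real.rpow_nonneg h2.le _),
        ← Real.rpow_natCast pt.2 (n - 1), ← Real.rpow_add h2]
      have hcast : ((n - 1 : ℕ) : ℝ) = (n : ℝ) - 1 := by
        rw [Nat.cast_sub (by omega : 1 ≤ n)]; norm_num
      rw [hcast]
      norm_num
    calc (ENNReal.ofReal |F pt| ^ q * ENNReal.ofReal (pt.2 ^ (-((n : ℝ) - 1)))) *
          (ENNReal.ofReal (pt.2 ^ (n - 1)) * c)
        = c * ENNReal.ofReal |F pt| ^ q *
            (ENNReal.ofReal (pt.2 ^ (-((n : ℝ) - 1))) * ENNReal.ofReal (pt.2 ^ (n - 1))) := by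
          ring
      _ = c * ENNReal.ofReal |F pt| ^ q := by rw [hw, mul_one]
  -- identification of the q-th power of the conical functional
  have hBdef : ∀ x', conicalFun n q F x' ^ q = ∫⁻ pt in cone n x', g pt := by
    intro x'
    simp only [conicalFun, hg_def]
    rw [← ENNReal.rpow_mul, one_div, inv_mul_cancel₀ hq0.ne', ENNReal.rpow_one]
  -- upper bound for the x'-integral
  have hupper : ∀ x', (∫⁻ pt, φ x' pt)
      ≤ E.indicator (fun x' => conicalFun n q F x' ^ q) x' := by
    intro x'
    by_cases hx : x' ∈ E
    · rw [Set.indicator_of_mem hx, hBdef x',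
        ← lintegral_indicator (hconeOpen x').measurableSet]
      apply lintegral_mono
      intro pt
      by_cases hc : pt ∈ cone n x'
      · have hT : (x', pt) ∈ T := hc
        rw [Set.indicator_of_mem hc]
        simp only [hφ_def]
        rw [Set.indicator_of_mem hT, mul_one]
        exact Set.indicator_le_self K g pt
      · have hT : (x', pt) ∉ T := hc
        rw [Set.indicator_of_notMem hc]
        simp only [hφ_def]
        rw [Set.indicator_of_notMem hT, mul_zero]
    · rw [Set.indicator_of_notMem hx]
      have h0 : ∀ pt, φ x' pt = 0 := by
        intro pt
        simp only [hφ_def]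
        by_cases hT : (x', pt) ∈ T
        · have hptK : pt ∉ K := fun hptK => hx ⟨pt, hptK, hT⟩
          rw [Set.indicator_of_notMem hptK, zero_mul]
        · rw [Set.indicator_of_notMem hT, mul_zero]
      simp [h0]
  -- main lower bound
  have hmain : c * (∫⁻ pt in K, ENNReal.ofReal |F pt| ^ q)
      ≤ ∫⁻ x' in E, conicalFun n q F x' ^ q := by
    rw [← hleft, ← hswap]
    calc (∫⁻ x', ∫⁻ pt, φ x' pt)
        ≤ ∫⁻ x', E.indicator (fun x' => conicalFun n q F x' ^ q) x' :=
          lintegral_mono hupper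
      _ = ∫⁻ x' in E, conicalFun n q F x' ^ q := lintegral_indicator hEmeas _
  -- measurability of the conical functional
  have hAmeas : Measurable (conicalFun n q F) := by
    have hker : Measurable fun z : EuclideanSpace ℝ (Fin (n - 1)) ×
        (EuclideanSpace ℝ (Fin (n - 1)) × ℝ) =>
        T.indicator (fun _ => (1 : ℝ≥0∞)) z * g z.2 :=
      (measurable_const.indicator hTopen.measurableSet).mul (hgmeas.comp measurable_snd)
    have h1 : Measurable fun x' => ∫⁻ pt, T.indicator (fun _ => (1 : ℝ≥0∞)) (x', pt) * g pt :=
      hker.lintegral_prod_right'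
    have h2 : conicalFun n q F
        = fun x' => (∫⁻ pt, T.indicator (fun _ => (1 : ℝ≥0∞)) (x', pt) * g pt) ^ (1 / q) := by
      funext x'
      simp only [conicalFun, hg_def]
      congr 1
      rw [← lintegral_indicator (hconeOpen x').measurableSet]
      apply lintegral_congr
      intro pt
      by_cases hc : pt ∈ cone n x'
      · rw [Set.indicator_of_mem hc, Set.indicator_of_mem (show (x', pt) ∈ T from hc), one_mul]
      · rw [Set.indicator_of_notMem hc,
          Set.indicator_of_notMem (show (x', pt) ∉ T from hc), zero_mul]
    rw [h2]
    exact h1.pow measurable_const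
  -- Hölder
  have hr1 : (1:ℝ) < p / q := (one_lt_div hq0).mpr hqp
  have ha0 : p / q ≠ 0 := by positivity
  have hconj : (p / q).HolderConjugate ((p / q) / (p / q - 1)) :=
    Real.HolderConjugate.conjExponent hr1
  have hqpq : q * (p / q) = p := by field_simp
  have hs : 1 / ((p / q) / (p / q - 1)) = 1 - q / p := by
    rw [one_div_div, sub_div, div_self ha0, one_div_div]
  have hchain : (∫⁻ x' in E, conicalFun n q F x' ^ q)
      ≤ tentNorm n p q F ^ q * volume E ^ (1 - q / p) := by
    have hfm : AEMeasurable (fun x' => conicalFun n q F x' ^ q) (volume.restrict E) :=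
      (hAmeas.pow measurable_const).aemeasurable
    have h := ENNReal.lintegral_mul_le_Lp_mul_Lq (volume.restrict E)
      (f := fun x' => conicalFun n q F x' ^ q) (g := fun _ => (1 : ℝ≥0∞)) hconj hfm
      aemeasurable_const
    simp only [Pi.mul_apply, mul_one, ENNReal.one_rpow] at h
    rw [setLIntegral_one, one_div_div, hs] at h
    simp_rw [← ENNReal.rpow_mul, hqpq] at h
    have e4 : tentNorm n p q F ^ q = (∫⁻ x', conicalFun n q F x' ^ p) ^ (q / p) := by
      simp only [tentNorm]
      rw [← ENNReal.rpow_mul, one_div_mul_eq_div]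
    calc (∫⁻ x' in E, conicalFun n q F x' ^ q)
        ≤ (∫⁻ x' in E, conicalFun n q F x' ^ p) ^ (q / p) * volume E ^ (1 - q / p) := h
      _ ≤ (∫⁻ x', conicalFun n q F x' ^ p) ^ (q / p) * volume E ^ (1 - q / p) :=
          mul_le_mul_left
            (ENNReal.rpow_le_rpow (setLIntegral_le_lintegral _ _) (by positivity)) _
      _ = tentNorm n p q F ^ q * volume E ^ (1 - q / p) := by rw [e4]
  have hfinal : (∫⁻ pt in K, ENNReal.ofReal |F pt| ^ q)
      ≤ c⁻¹ * (tentNorm n p q F ^ q * volume E ^ (1 - q / p)) := by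
    calc (∫⁻ pt in K, ENNReal.ofReal |F pt| ^ q)
        = c⁻¹ * (c * ∫⁻ pt in K, ENNReal.ofReal |F pt| ^ q) := by
          rw [← mul_assoc, ENNReal.inv_mul_cancel hc0.ne' hctop, one_mul]
      _ ≤ c⁻¹ * (tentNorm n p q F ^ q * volume E ^ (1 - q / p)) :=
          mul_le_mul_right (hmain.trans hchain) _
  have e1 : (tentNorm n p q F ^ q) ^ (1 / q) = tentNorm n p q F := by
    rw [← ENNReal.rpow_mul, mul_one_div, div_self hq0.ne', ENNReal.rpow_one]
  have e2 : (volume E ^ (1 - q / p)) ^ (1 / q) = volume E ^ (1 / q - 1 / p) := by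
    rw [← ENNReal.rpow_mul]
    congr 1
    field_simp
  have e3 : c⁻¹ ^ (1 / q) ≤ ENNReal.ofReal (max 1 c⁻¹.toReal) := by
    have h1C : (1 : ℝ≥0∞) ≤ ENNReal.ofReal (max 1 c⁻¹.toReal) :=
      ENNReal.one_le_ofReal.mpr (le_max_left _ _)
    have hcC : c⁻¹ ≤ ENNReal.ofReal (max 1 c⁻¹.toReal) := by
      calc c⁻¹ = ENNReal.ofReal c⁻¹.toReal := (ENNReal.ofReal_toReal hcitop).symm
        _ ≤ _ := ENNReal.ofReal_le_ofReal (le_max_right _ _)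
    rcases le_total c⁻¹ 1 with hc1 | hc1
    · exact le_trans (ENNReal.rpow_le_one hc1 hq') h1C
    · calc c⁻¹ ^ (1 / q) ≤ c⁻¹ ^ (1 : ℝ) := by
            apply ENNReal.rpow_le_rpow_of_exponent_le hc1
            rw [div_le_one hq0]; exact hq
        _ = c⁻¹ := ENNReal.rpow_one _
        _ ≤ _ := hcC
  calc (∫⁻ pt in K, ENNReal.ofReal |F pt| ^ q) ^ (1 / q)
      ≤ (c⁻¹ * (tentNorm n p q F ^ q * volume E ^ (1 - q / p))) ^ (1 / q) :=
        ENNReal.rpow_le_rpow hfinal hq'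
    _ = c⁻¹ ^ (1 / q) * (tentNorm n p q F * volume E ^ (1 / q - 1 / p)) := by
        rw [ENNReal.mul_rpow_of_nonneg _ _ hq', ENNReal.mul_rpow_of_nonneg _ _ hq', e1, e2]
    _ = c⁻¹ ^ (1 / q) * volume E ^ (1 / q - 1 / p) * tentNorm n p q F := by ring
    _ ≤ ENNReal.ofReal (max 1 c⁻¹.toReal) * volume E ^ (1 / q - 1 / p) * tentNorm n p q F :=
        mul_le_mul_left (mul_le_mul_left e3 _) _
end

section
/- Let n ≥ 2, 1 < η < ∞ with conjugate exponent η', and 1 < τ < ∞. There is a constant C such that for every F ∈ T^{τ,η} (tent space on ℝ^n_+), every x' ∈ ℝ^{n-1}, and every x_n > 0: ∫_{B_{x_n}(x')} ∫_0^{x_n/2} |F(y',y_n)| (|x'-y'|^2 + (x_n-y_n)^2)^{-(n-2)/2} dy_n dy' ≤ C x_n^{2 - (n-1)/τ - 1/η} ‖F‖_{T^{τ,η}}. -/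
open MeasureTheory Set ENNReal
open Metric

open Metric in
lemma cone_isOpen (n : ℕ) (z : EuclideanSpace ℝ (Fin (n-1))) : IsOpen (cone n z) := by
  have h1 : IsOpen {p : EuclideanSpace ℝ (Fin (n-1)) × ℝ | 0 < p.2} :=
    isOpen_lt continuous_const continuous_snd
  have h2 : IsOpen {p : EuclideanSpace ℝ (Fin (n-1)) × ℝ | dist z p.1 < p.2} :=
    isOpen_lt (continuous_const.dist continuous_fst) continuous_snd
  exact h1.inter h2

lemma conicalFun_measurable (n : ℕ) (q : ℝ) (F : EuclideanSpace ℝ (Fin (n-1)) × ℝ → ℝ)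
    (hF : Measurable F) : Measurable (conicalFun n q F) := by
  have hC : MeasurableSet {w : EuclideanSpace ℝ (Fin (n-1)) × (EuclideanSpace ℝ (Fin (n-1)) × ℝ) |
      0 < w.2.2 ∧ dist w.1 w.2.1 < w.2.2} := by
    have h1 : IsOpen {w : EuclideanSpace ℝ (Fin (n-1)) × (EuclideanSpace ℝ (Fin (n-1)) × ℝ) | 0 < w.2.2} :=
      isOpen_lt continuous_const (continuous_snd.snd)
    have h2 : IsOpen {w : EuclideanSpace ℝ (Fin (n-1)) × (EuclideanSpace ℝ (Fin (n-1)) × ℝ) |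
        dist w.1 w.2.1 < w.2.2} :=
      isOpen_lt (continuous_fst.dist (continuous_snd.fst)) (continuous_snd.snd)
    exact (h1.inter h2).measurableSet
  have hg : Measurable (fun p : EuclideanSpace ℝ (Fin (n-1)) × ℝ =>
      ENNReal.ofReal |F p| ^ q * ENNReal.ofReal (p.2 ^ (-((n : ℝ) - 1)))) := by fun_prop
  have key : Measurable (fun z => ∫⁻ p in cone n z,
      ENNReal.ofReal |F p| ^ q * ENNReal.ofReal (p.2 ^ (-((n : ℝ) - 1)))) := by
    have : (fun z => ∫⁻ p in cone n z,
        ENNReal.ofReal |F p| ^ q * ENNReal.ofReal (p.2 ^ (-((n : ℝ) - 1))))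
        = fun z => ∫⁻ p, ({w : EuclideanSpace ℝ (Fin (n-1)) × (EuclideanSpace ℝ (Fin (n-1)) × ℝ) |
            0 < w.2.2 ∧ dist w.1 w.2.1 < w.2.2}).indicator
            (fun w => ENNReal.ofReal |F w.2| ^ q * ENNReal.ofReal (w.2.2 ^ (-((n : ℝ) - 1)))) (z, p) := by
      funext z
      rw [← lintegral_indicator ((cone_isOpen n z).measurableSet)]
      refine lintegral_congr fun p => ?_
      by_cases hp : p ∈ cone n z
      · rw [indicator_of_mem hp, indicator_of_mem (by exact hp)]
      · rw [indicator_of_notMem hp, indicator_of_notMem (by exact hp)]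
    rw [this]
    exact Measurable.lintegral_prod_right' ((hg.comp measurable_snd).indicator hC)
  exact key.pow_const _

lemma holder_set {α : Type*} [MeasurableSpace α] (μ : Measure α) {p q : ℝ}
    (hpq : p.HolderConjugate q) {f g : α → ℝ≥0∞} (hf : AEMeasurable f μ) (hg : AEMeasurable g μ) :
    ∫⁻ a, f a * g a ∂μ ≤ (∫⁻ a, f a ^ p ∂μ) ^ (1 / p) * (∫⁻ a, g a ^ q ∂μ) ^ (1 / q) := by
  simpa using ENNReal.lintegral_mul_le_Lp_mul_Lq μ hpq hf hg

lemma step3 (n : ℕ) (η τ τ' : ℝ) (hτc : τ.HolderConjugate τ')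
    (F : EuclideanSpace ℝ (Fin (n-1)) × ℝ → ℝ) (hF : Measurable F)
    (s : Set (EuclideanSpace ℝ (Fin (n-1)))) (hs : MeasurableSet s) :
    ∫⁻ z in s, conicalFun n η F z ≤ tentNorm n τ η F * (volume s) ^ (1 / τ') := by
  have hA := conicalFun_measurable n η F hF
  have h1 : ∫⁻ z in s, conicalFun n η F z
      = ∫⁻ z, conicalFun n η F z * s.indicator (fun _ => 1) z := by
    rw [← lintegral_indicator hs]
    refine lintegral_congr fun z => ?_
    by_cases hz : z ∈ s <;> simp [hz]
  rw [h1]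
  have h2 := holder_set volume hτc hA.aemeasurable
    ((measurable_const.indicator hs : Measurable (s.indicator (fun _ => (1:ℝ≥0∞))))).aemeasurable
  refine h2.trans ?_
  have h3 : ∫⁻ z, s.indicator (fun _ => (1:ℝ≥0∞)) z ^ τ' = volume s := by
    have : ∀ z, s.indicator (fun _ => (1:ℝ≥0∞)) z ^ τ' = s.indicator (fun _ => 1) z := by
      intro z; by_cases hz : z ∈ s <;>
        simp [hz, ENNReal.zero_rpow_of_pos hτc.symm.pos]
    simp_rw [this]
    rw [lintegral_indicator hs]; simp
  rw [h3]
  exact le_of_eq rfl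

lemma aux_vol {m : ℕ} (z : EuclideanSpace ℝ (Fin m)) {r : ℝ} (hr : 0 < r) :
    volume (ball z r) = ENNReal.ofReal (r ^ m) * volume (ball (0 : EuclideanSpace ℝ (Fin m)) 1) := by
  simpa using Measure.addHaar_ball_of_pos (volume : Measure (EuclideanSpace ℝ (Fin m))) z hr

lemma kernel_bound (n : ℕ) (hn : 2 ≤ n) {d t xn : ℝ} (hxn : 0 < xn)
    (hd : 0 ≤ d) (ht : xn / 2 ≤ t) (ht' : t ≤ xn) :
    (d ^ 2 + t ^ 2) ^ (-((n : ℝ) - 2) / 2) ≤ (xn / 2) ^ (-((n : ℝ) - 2)) := by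
  have hb : (xn / 2) ^ (2:ℕ) ≤ d ^ 2 + t ^ 2 := by nlinarith
  have hpos : (0:ℝ) < (xn / 2) ^ (2:ℕ) := by positivity
  have hexp : -((n : ℝ) - 2) / 2 ≤ 0 := by
    have : (2:ℝ) ≤ (n:ℝ) := by exact_mod_cast hn
    linarith
  calc (d ^ 2 + t ^ 2) ^ (-((n : ℝ) - 2) / 2)
      ≤ ((xn / 2) ^ (2:ℕ)) ^ (-((n : ℝ) - 2) / 2) :=
        Real.rpow_le_rpow_of_nonpos hpos hb hexp
    _ = (xn / 2) ^ (-((n : ℝ) - 2)) := by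
        rw [← Real.rpow_natCast (xn/2) 2, ← Real.rpow_mul (by positivity)]
        norm_num [mul_div_cancel₀]

lemma step2 (n : ℕ) (hn : 2 ≤ n) (η η' : ℝ) (hηc : η.HolderConjugate η')
    (F : EuclideanSpace ℝ (Fin (n-1)) × ℝ → ℝ) (hF : Measurable F)
    (x' : EuclideanSpace ℝ (Fin (n-1))) (xn : ℝ) (hxn : 0 < xn) :
    ∫⁻ p in {p : EuclideanSpace ℝ (Fin (n-1)) × ℝ | dist x' p.1 ≤ xn ∧ p.2 ∈ Ioo 0 (xn/2)},
        ENNReal.ofReal |F p|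
      ≤ (volume (ball (0 : EuclideanSpace ℝ (Fin (n-1))) 1))⁻¹ *
        ((volume (ball (0 : EuclideanSpace ℝ (Fin (n-1))) 1) * ENNReal.ofReal (xn/2)) ^ (1/η') *
         ∫⁻ z in ball x' (2*xn), conicalFun n η F z) := by
  set v : ℝ≥0∞ := volume (ball (0 : EuclideanSpace ℝ (Fin (n-1))) 1) with hv
  have hv0 : v ≠ 0 := (measure_ball_pos volume (0 : EuclideanSpace ℝ (Fin (n-1))) one_pos).ne'
  have hvtop : v ≠ ⊤ := measure_ball_lt_top.ne
  set E : Set (EuclideanSpace ℝ (Fin (n-1)) × ℝ) := {p | dist x' p.1 ≤ xn ∧ p.2 ∈ Ioo 0 (xn/2)} with hEdef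
  have hE : MeasurableSet E := by
    have h1 : IsClosed {p : EuclideanSpace ℝ (Fin (n-1)) × ℝ | dist x' p.1 ≤ xn} :=
      isClosed_le (continuous_const.dist continuous_fst) continuous_const
    exact h1.measurableSet.inter (measurable_snd measurableSet_Ioo)
  set a : EuclideanSpace ℝ (Fin (n-1)) × ℝ → ℝ≥0∞ := fun p => ENNReal.ofReal (p.2 ^ (-((n:ℝ)-1))) with ha
  set h : EuclideanSpace ℝ (Fin (n-1)) × ℝ → ℝ≥0∞ := fun p => ENNReal.ofReal |F p| * a p with hh
  have hameas : Measurable a := by fun_prop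
  have hFabs : Measurable (fun p : EuclideanSpace ℝ (Fin (n-1)) × ℝ => ENNReal.ofReal |F p|) :=
    ENNReal.measurable_ofReal.comp hF.abs
  have hhmeas : Measurable h := hFabs.mul hameas
  have hhfin : ∀ p, h p ≠ ⊤ := fun p => ENNReal.mul_ne_top ofReal_ne_top ofReal_ne_top
  have hpow : ∀ t : ℝ, 0 < t →
      ENNReal.ofReal (t ^ (-((n:ℝ)-1))) * ENNReal.ofReal (t ^ (n-1 : ℕ)) = 1 := by
    intro t ht
    rw [← ENNReal.ofReal_mul (by positivity), ← Real.rpow_natCast t (n-1),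
      ← Real.rpow_add ht]
    have : (-((n:ℝ)-1)) + ((n-1:ℕ):ℝ) = 0 := by
      have : ((n-1:ℕ):ℝ) = (n:ℝ) - 1 := by
        push_cast [Nat.cast_sub (by omega : 1 ≤ n)]; ring
      rw [this]; ring
    rw [this, Real.rpow_zero, ofReal_one]
  set U : Set ((EuclideanSpace ℝ (Fin (n-1)) × ℝ) × EuclideanSpace ℝ (Fin (n-1))) := {w | dist w.2 w.1.1 < w.1.2} with hUdef
  have hU : MeasurableSet U :=
    (isOpen_lt (continuous_snd.dist (continuous_fst.fst)) (continuous_fst.snd)).measurableSet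
  -- step (ii)+(iii)
  have e1 : ∫⁻ p in E, ENNReal.ofReal |F p|
      = (∫⁻ p in E, h p * volume (ball p.1 p.2)) * v⁻¹ := by
    rw [← lintegral_mul_const' _ _ (ENNReal.inv_ne_top.mpr hv0)]
    refine setLIntegral_congr_fun hE fun p hp => ?_
    rw [aux_vol p.1 hp.2.1]
    have hc : (a p * ENNReal.ofReal (p.2 ^ (n-1:ℕ))) * (v * v⁻¹) = 1 := by
      rw [hpow p.2 hp.2.1, ENNReal.mul_inv_cancel hv0 hvtop, one_mul]
    calc ENNReal.ofReal |F p|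
        = ENNReal.ofReal |F p| * ((a p * ENNReal.ofReal (p.2 ^ (n-1:ℕ))) * (v * v⁻¹)) := by
          rw [hc, mul_one]
      _ = ENNReal.ofReal |F p| * a p * (ENNReal.ofReal (p.2 ^ (n-1:ℕ)) * v) * v⁻¹ := by
          ring
  -- step (iv)+(v)
  have e2 : ∫⁻ p in E, h p * volume (ball p.1 p.2)
      = ∫⁻ z, ∫⁻ p in E, h p * U.indicator (fun _ => 1) (p, z) := by
    have hvol : ∀ p : EuclideanSpace ℝ (Fin (n-1)) × ℝ, p ∈ E →
        volume (ball p.1 p.2) = ∫⁻ z, U.indicator (fun _ => (1:ℝ≥0∞)) (p, z) := by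
      intro p hp
      have hfun : (fun z => U.indicator (fun _ => (1:ℝ≥0∞)) (p, z))
          = (ball p.1 p.2).indicator (fun _ => 1) := by
        funext z; by_cases hz : dist z p.1 < p.2
        · rw [indicator_of_mem (show (p,z) ∈ U from hz), indicator_of_mem (mem_ball.mpr hz)]
        · rw [indicator_of_notMem (show (p,z) ∉ U from hz),
            indicator_of_notMem (fun hh => hz (mem_ball.mp hh))]
      rw [hfun, lintegral_indicator_const measurableSet_ball, one_mul]
    have e2a : ∫⁻ p in E, h p * volume (ball p.1 p.2)
        = ∫⁻ p in E, ∫⁻ z, h p * U.indicator (fun _ => 1) (p, z) := by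
      refine setLIntegral_congr_fun hE fun p hp => ?_
      rw [hvol p hp, ← lintegral_const_mul' _ _ (hhfin p)]
    rw [e2a]
    exact lintegral_lintegral_swap
      (((hhmeas.comp measurable_fst).mul
        (measurable_const.indicator hU)).aemeasurable)
  -- vanishing outside the big ball
  have key0 : ∀ z, z ∉ ball x' (2*xn) →
      (∫⁻ p in E, h p * U.indicator (fun _ => 1) (p, z)) = 0 := by
    intro z hz
    have hzero : ∀ p ∈ E, h p * U.indicator (fun _ => (1:ℝ≥0∞)) (p, z) = 0 := by
      intro p hp
      have hnot : (p, z) ∉ U := by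
        intro hU'
        simp only [mem_ball, not_lt] at hz
        have h1 : dist z x' ≤ dist z p.1 + dist p.1 x' := dist_triangle _ _ _
        have h2 : dist z p.1 < p.2 := hU'
        have h3 : p.2 < xn/2 := hp.2.2
        have h4 : dist p.1 x' ≤ xn := by rw [dist_comm]; exact hp.1
        linarith
      rw [indicator_of_notMem hnot, mul_zero]
    calc (∫⁻ p in E, h p * U.indicator (fun _ => 1) (p, z))
        = ∫⁻ _ in E, (0:ℝ≥0∞) := setLIntegral_congr_fun hE hzero
      _ = 0 := lintegral_zero
  -- the main inner estimate
  have key : ∀ z ∈ ball x' (2*xn),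
      (∫⁻ p in E, h p * U.indicator (fun _ => 1) (p, z))
        ≤ conicalFun n η F z * (v * ENNReal.ofReal (xn/2)) ^ (1/η') := by
    intro z hz
    set S : Set (EuclideanSpace ℝ (Fin (n-1)) × ℝ) := cone n z ∩ {p | p.2 < xn/2} with hSdef
    have hS : MeasurableSet S :=
      (cone_isOpen n z).measurableSet.inter (measurable_snd measurableSet_Iio)
    have stepA : (∫⁻ p in E, h p * U.indicator (fun _ => 1) (p, z)) ≤ ∫⁻ p in S, h p := by
      have hb : ∀ p ∈ E, h p * U.indicator (fun _ => (1:ℝ≥0∞)) (p,z) ≤ S.indicator h p := by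
        intro p hp
        by_cases hpU : (p,z) ∈ U
        · have hpS : p ∈ S := ⟨⟨hp.2.1, hpU⟩, hp.2.2⟩
          rw [indicator_of_mem hpU, indicator_of_mem hpS, mul_one]
        · rw [indicator_of_notMem hpU, mul_zero]; exact zero_le
      calc (∫⁻ p in E, h p * U.indicator (fun _ => 1) (p, z))
          ≤ ∫⁻ p in E, S.indicator h p := setLIntegral_mono' hE hb
        _ ≤ ∫⁻ p, S.indicator h p := setLIntegral_le_lintegral _ _
        _ = ∫⁻ p in S, h p := lintegral_indicator hS h
    -- Hölder on S
    set f : EuclideanSpace ℝ (Fin (n-1)) × ℝ → ℝ≥0∞ := fun p => ENNReal.ofReal |F p| * a p ^ ((1:ℝ)/η) with hf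
    set g : EuclideanSpace ℝ (Fin (n-1)) × ℝ → ℝ≥0∞ := fun p => a p ^ ((1:ℝ)/η') with hg
    have hfη : ∀ p, f p ^ η = ENNReal.ofReal |F p| ^ η * a p := by
      intro p
      rw [hf]
      rw [ENNReal.mul_rpow_of_nonneg _ _ (le_of_lt hηc.pos), ← ENNReal.rpow_mul,
        one_div_mul_cancel hηc.ne_zero, ENNReal.rpow_one]
    have hgη : ∀ p, g p ^ η' = a p := by
      intro p
      rw [hg]
      rw [← ENNReal.rpow_mul, one_div_mul_cancel hηc.symm.ne_zero, ENNReal.rpow_one]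
    have hfgh : ∀ p ∈ S, h p = f p * g p := by
      intro p hp
      have hp2 : 0 < p.2 := hp.1.1
      have hane : a p ≠ 0 := by
        simp only [ha, ne_eq, ENNReal.ofReal_eq_zero, not_le]
        positivity
      rw [hf, hg, mul_assoc, ← ENNReal.rpow_add _ _ hane ofReal_ne_top]
      rw [show (1:ℝ)/η + 1/η' = 1 by
        rw [one_div, one_div]; exact hηc.inv_add_inv_eq_one]
      rw [ENNReal.rpow_one]
    have stepB : ∫⁻ p in S, h p
        ≤ (∫⁻ p in S, ENNReal.ofReal |F p| ^ η * a p) ^ (1/η)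
          * (∫⁻ p in S, a p) ^ (1/η') := by
      have h0 : ∫⁻ p in S, h p = ∫⁻ p in S, f p * g p :=
        setLIntegral_congr_fun hS hfgh
      rw [h0]
      have hfmeas : Measurable f := hFabs.mul (hameas.pow_const ((1:ℝ)/η))
      have hgmeas : Measurable g := hameas.pow_const ((1:ℝ)/η')
      have hold := holder_set (volume.restrict S) hηc
        hfmeas.aemeasurable hgmeas.aemeasurable
      refine hold.trans (le_of_eq ?_)
      congr 1
      · congr 1; exact lintegral_congr fun p => hfη p
      · congr 1; exact lintegral_congr fun p => hgη p
    -- first factor ≤ conicalFun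
    have fac1 : (∫⁻ p in S, ENNReal.ofReal |F p| ^ η * a p) ^ (1/η) ≤ conicalFun n η F z := by
      exact ENNReal.rpow_le_rpow (lintegral_mono_set inter_subset_left) hηc.one_div_nonneg
    -- second factor computation
    have fac2 : ∫⁻ p in S, a p = v * ENNReal.ofReal (xn/2) := by
      rw [← lintegral_indicator hS]
      rw [show (volume : Measure (EuclideanSpace ℝ (Fin (n-1)) × ℝ)) = (volume : Measure (EuclideanSpace ℝ (Fin (n-1)))).prod volume from
        Measure.volume_eq_prod _ _]
      rw [lintegral_prod_symm _ ((hameas.indicator hS).aemeasurable)]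
      have inner : ∀ yn : ℝ, (∫⁻ y' : EuclideanSpace ℝ (Fin (n-1)), S.indicator a (y', yn))
          = (Ioo (0:ℝ) (xn/2)).indicator (fun _ => v) yn := by
        intro yn
        by_cases hyn : yn ∈ Ioo (0:ℝ) (xn/2)
        · rw [indicator_of_mem hyn]
          have hfun : (fun y' : EuclideanSpace ℝ (Fin (n-1)) => S.indicator a (y', yn))
              = (ball z yn).indicator (fun _ => ENNReal.ofReal (yn ^ (-((n:ℝ)-1)))) := by
            funext y'
            by_cases hy : dist y' z < yn
            · rw [indicator_of_mem (show (y', yn) ∈ S from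
                ⟨⟨hyn.1, by rw [dist_comm]; exact hy⟩, hyn.2⟩),
                indicator_of_mem (mem_ball.mpr hy)]
            · rw [indicator_of_notMem
                (show (y', yn) ∉ S from fun hmem => hy (by rw [dist_comm]; exact hmem.1.2)),
                indicator_of_notMem (fun hh => hy (mem_ball.mp hh))]
          rw [hfun, lintegral_indicator_const measurableSet_ball, aux_vol z hyn.1]
          rw [← mul_assoc, hpow yn hyn.1, one_mul]
        · rw [indicator_of_notMem hyn]
          have : ∀ y' : EuclideanSpace ℝ (Fin (n-1)), S.indicator a (y', yn) = 0 := by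
            intro y'
            refine indicator_of_notMem (fun hmem => ?_) _
            exact hyn ⟨hmem.1.1, hmem.2⟩
          simp only [this, lintegral_zero]
      calc (∫⁻ yn : ℝ, ∫⁻ y' : EuclideanSpace ℝ (Fin (n-1)), S.indicator a (y', yn))
          = ∫⁻ yn : ℝ, (Ioo (0:ℝ) (xn/2)).indicator (fun _ => v) yn :=
            lintegral_congr inner
        _ = v * volume (Ioo (0:ℝ) (xn/2)) := lintegral_indicator_const measurableSet_Ioo v
        _ = v * ENNReal.ofReal (xn/2) := by rw [Real.volume_Ioo, sub_zero]
    calc (∫⁻ p in E, h p * U.indicator (fun _ => 1) (p, z))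
        ≤ ∫⁻ p in S, h p := stepA
      _ ≤ (∫⁻ p in S, ENNReal.ofReal |F p| ^ η * a p) ^ (1/η)
          * (∫⁻ p in S, a p) ^ (1/η') := stepB
      _ ≤ conicalFun n η F z * (v * ENNReal.ofReal (xn/2)) ^ (1/η') := by
          rw [fac2]; exact mul_le_mul_left fac1 _
  -- assemble
  set c : ℝ≥0∞ := (v * ENNReal.ofReal (xn/2)) ^ (1/η') with hc
  have hcfin : c ≠ ⊤ :=
    ENNReal.rpow_ne_top_of_nonneg hηc.symm.one_div_nonneg
      (ENNReal.mul_ne_top hvtop ofReal_ne_top)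
  have e3 : (∫⁻ z, ∫⁻ p in E, h p * U.indicator (fun _ => 1) (p, z))
      ≤ (∫⁻ z in ball x' (2*xn), conicalFun n η F z) * c := by
    have hb : ∀ z, (∫⁻ p in E, h p * U.indicator (fun _ => 1) (p, z))
        ≤ (ball x' (2*xn)).indicator (fun z => conicalFun n η F z * c) z := by
      intro z
      by_cases hz : z ∈ ball x' (2*xn)
      · rw [indicator_of_mem hz]; exact key z hz
      · rw [indicator_of_notMem hz, key0 z hz]
    calc (∫⁻ z, ∫⁻ p in E, h p * U.indicator (fun _ => 1) (p, z))
        ≤ ∫⁻ z, (ball x' (2*xn)).indicator (fun z => conicalFun n η F z * c) z :=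
          lintegral_mono hb
      _ = ∫⁻ z in ball x' (2*xn), conicalFun n η F z * c :=
          lintegral_indicator measurableSet_ball _
      _ = (∫⁻ z in ball x' (2*xn), conicalFun n η F z) * c :=
          lintegral_mul_const' _ _ hcfin
  calc ∫⁻ p in E, ENNReal.ofReal |F p|
      = (∫⁻ z, ∫⁻ p in E, h p * U.indicator (fun _ => 1) (p, z)) * v⁻¹ := by
        rw [e1, e2]
    _ ≤ ((∫⁻ z in ball x' (2*xn), conicalFun n η F z) * c) * v⁻¹ :=
        mul_le_mul_left e3 _
    _ = v⁻¹ * (c * ∫⁻ z in ball x' (2*xn), conicalFun n η F z) := by ring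


/-- **Estimate of the near-boundary Newtonian potential (term `J₁`).** For
`1 < η, τ < ∞` there is `C` such that for all `F ∈ T^{τ,η}`, `x' ∈ ℝ^{n-1}` and
`x_n > 0`:
`∫_{B_{x_n}(x')} ∫_0^{x_n/2} |F(y)| (|x'-y'|²+(x_n-y_n)²)^{-(n-2)/2} dy
  ≤ C x_n^{2-(n-1)/τ-1/η} ‖F‖_{T^{τ,η}}`. -/
theorem near_boundary_potential_estimate (n : ℕ) (hn : 2 ≤ n) (η τ : ℝ)
    (hη : 1 < η) (hτ : 1 < τ) :
    ∃ C : ℝ, 0 < C ∧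
      ∀ (F : EuclideanSpace ℝ (Fin (n - 1)) × ℝ → ℝ), Measurable F →
        tentNorm n τ η F < ⊤ →
        ∀ (x' : EuclideanSpace ℝ (Fin (n - 1))) (xn : ℝ), 0 < xn →
          (∫⁻ p in {p : EuclideanSpace ℝ (Fin (n - 1)) × ℝ |
                dist x' p.1 ≤ xn ∧ p.2 ∈ Ioo 0 (xn / 2)},
              ENNReal.ofReal |F p| *
                ENNReal.ofReal ((dist x' p.1 ^ 2 + (xn - p.2) ^ 2) ^ (-((n : ℝ) - 2) / 2))) ≤
            ENNReal.ofReal (C * xn ^ (2 - ((n : ℝ) - 1) / τ - 1 / η)) * tentNorm n τ η F := by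
  have hηc : η.HolderConjugate η.conjExponent := Real.HolderConjugate.conjExponent hη
  have hτc : τ.HolderConjugate τ.conjExponent := Real.HolderConjugate.conjExponent hτ
  set η' := η.conjExponent
  set τ' := τ.conjExponent
  set a : ℝ := -((n:ℝ)-2) with hadef
  set b : ℝ := 1/η' with hbdef
  set c : ℝ := 1/τ' with hcdef
  have hb0 : 0 ≤ b := hηc.symm.one_div_nonneg
  have hc0 : 0 ≤ c := hτc.symm.one_div_nonneg
  set v : ℝ≥0∞ := volume (ball (0 : EuclideanSpace ℝ (Fin (n-1))) 1) with hv
  have hv0 : v ≠ 0 := (measure_ball_pos volume (0 : EuclideanSpace ℝ (Fin (n-1))) one_pos).ne'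
  have hvtop : v ≠ ⊤ := measure_ball_lt_top.ne
  set V : ℝ := v.toReal with hVdef
  have hV : 0 < V := ENNReal.toReal_pos hv0 hvtop
  have hVv : v = ENNReal.ofReal V := (ENNReal.ofReal_toReal hvtop).symm
  set m' : ℝ := ((n-1:ℕ):ℝ) with hm'def
  have hm' : m' = (n:ℝ) - 1 := by
    rw [hm'def]; push_cast [Nat.cast_sub (by omega : 1 ≤ n)]; ring
  refine ⟨(2:ℝ)⁻¹ ^ a * V⁻¹ * (V ^ b * (2:ℝ)⁻¹ ^ b) * ((2:ℝ) ^ (m' * c) * V ^ c), by positivity,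
    ?_⟩
  intro F hF hT x' xn hxn
  set C : ℝ := (2:ℝ)⁻¹ ^ a * V⁻¹ * (V ^ b * (2:ℝ)⁻¹ ^ b) * ((2:ℝ) ^ (m' * c) * V ^ c) with hCdef
  set E : Set (EuclideanSpace ℝ (Fin (n-1)) × ℝ) :=
    {p | dist x' p.1 ≤ xn ∧ p.2 ∈ Ioo 0 (xn/2)} with hEdef
  have hE : MeasurableSet E := by
    have h1 : IsClosed {p : EuclideanSpace ℝ (Fin (n-1)) × ℝ | dist x' p.1 ≤ xn} :=
      isClosed_le (continuous_const.dist continuous_fst) continuous_const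
    exact h1.measurableSet.inter (measurable_snd measurableSet_Ioo)
  set A₁ : ℝ := (xn/2) ^ a with hA₁
  -- step 1 : bound kernel
  have step1 : (∫⁻ p in E, ENNReal.ofReal |F p| *
        ENNReal.ofReal ((dist x' p.1 ^ 2 + (xn - p.2) ^ 2) ^ (-((n : ℝ) - 2) / 2)))
      ≤ (∫⁻ p in E, ENNReal.ofReal |F p|) * ENNReal.ofReal A₁ := by
    rw [← lintegral_mul_const' _ _ ofReal_ne_top]
    refine setLIntegral_mono' hE fun p hp => ?_
    refine mul_le_mul_right (ofReal_le_ofReal ?_) _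
    exact kernel_bound n hn hxn dist_nonneg (by linarith [hp.2.2]) (by linarith [hp.2.1])
  have step2' := step2 n hn η η' hηc F hF x' xn hxn
  have step3' := step3 n η τ τ' hτc F hF (ball x' (2*xn)) measurableSet_ball
  -- put things together
  have hvol2 : volume (ball x' (2*xn)) = ENNReal.ofReal ((2*xn)^(n-1:ℕ)) * v :=
    aux_vol x' (by linarith)
  set T := tentNorm n τ η F with hT'
  have chain : (∫⁻ p in E, ENNReal.ofReal |F p| *
        ENNReal.ofReal ((dist x' p.1 ^ 2 + (xn - p.2) ^ 2) ^ (-((n : ℝ) - 2) / 2)))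
      ≤ (v⁻¹ * ((v * ENNReal.ofReal (xn/2)) ^ b *
          (T * (ENNReal.ofReal ((2*xn)^(n-1:ℕ)) * v) ^ c))) * ENNReal.ofReal A₁ := by
    refine step1.trans ?_
    refine mul_le_mul_left ?_ _
    refine step2'.trans ?_
    refine mul_le_mul_right ?_ _
    refine mul_le_mul_right ?_ _
    rw [← hvol2]
    exact step3'
  refine chain.trans ?_
  have rearr : (v⁻¹ * ((v * ENNReal.ofReal (xn/2)) ^ b *
          (T * (ENNReal.ofReal ((2*xn)^(n-1:ℕ)) * v) ^ c))) * ENNReal.ofReal A₁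
      = (ENNReal.ofReal A₁ * v⁻¹ * (v * ENNReal.ofReal (xn/2)) ^ b *
          (ENNReal.ofReal ((2*xn)^(n-1:ℕ)) * v) ^ c) * T := by ring
  rw [rearr]
  refine mul_le_mul_left ?_ T
  -- scalar computation
  have hsc : ENNReal.ofReal A₁ * v⁻¹ * (v * ENNReal.ofReal (xn/2)) ^ b *
      (ENNReal.ofReal ((2*xn)^(n-1:ℕ)) * v) ^ c
      = ENNReal.ofReal (A₁ * V⁻¹ * (V * (xn/2)) ^ b * (((2*xn)^(n-1:ℕ)) * V) ^ c) := by
    rw [hVv, ← ENNReal.ofReal_inv_of_pos hV, ← ENNReal.ofReal_mul hV.le,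
      ← ENNReal.ofReal_mul (show (0:ℝ) ≤ (2*xn)^(n-1:ℕ) by positivity),
      ENNReal.ofReal_rpow_of_nonneg (by positivity) hb0,
      ENNReal.ofReal_rpow_of_nonneg (by positivity) hc0,
      ← ENNReal.ofReal_mul (by positivity), ← ENNReal.ofReal_mul (by positivity),
      ← ENNReal.ofReal_mul (by positivity)]
  rw [hsc]
  refine ofReal_le_ofReal (le_of_eq ?_)
  -- real computation
  have hb' : b = 1 - 1/η := by
    rw [hbdef, one_div, one_div, ← hηc.one_sub_inv]
  have hc' : c = 1 - 1/τ := by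
    rw [hcdef, one_div, one_div, ← hτc.one_sub_inv]
  have hexp : a + b + m' * c = 2 - ((n:ℝ)-1)/τ - 1/η := by
    rw [hadef, hb', hc', hm']
    field_simp
    ring
  calc A₁ * V⁻¹ * (V * (xn/2)) ^ b * (((2*xn)^(n-1:ℕ)) * V) ^ c
      = (xn ^ a * (2:ℝ)⁻¹ ^ a) * V⁻¹ *
        (V ^ b * (xn ^ b * (2:ℝ)⁻¹ ^ b)) *
        (((2:ℝ) ^ (m' * c) * xn ^ (m' * c)) * V ^ c) := by
        rw [hA₁, show xn/2 = xn * 2⁻¹ by ring,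
          Real.mul_rpow hxn.le (by norm_num : (0:ℝ) ≤ 2⁻¹),
          Real.mul_rpow hV.le (by positivity : (0:ℝ) ≤ xn * 2⁻¹),
          Real.mul_rpow hxn.le (by norm_num : (0:ℝ) ≤ 2⁻¹),
          ← Real.rpow_natCast (2*xn) (n-1), ← hm'def,
          Real.mul_rpow (by positivity : (0:ℝ) ≤ (2*xn) ^ m') hV.le,
          Real.mul_rpow (by norm_num : (0:ℝ) ≤ 2) hxn.le,
          Real.mul_rpow (by positivity : (0:ℝ) ≤ (2:ℝ) ^ m') (by positivity : (0:ℝ) ≤ xn ^ m'),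
          ← Real.rpow_mul (by norm_num : (0:ℝ) ≤ 2),
          ← Real.rpow_mul hxn.le]
    _ = C * (xn ^ a * xn ^ b * xn ^ (m' * c)) := by rw [hCdef]; ring
    _ = C * xn ^ (2 - ((n:ℝ)-1)/τ - 1/η) := by
        rw [← Real.rpow_add hxn, ← Real.rpow_add hxn, hexp]
end
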